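/- Let m ≠ 0 be a real constant and let g₃ be the metric on ℝ³ with coordinates (τ,x,y) whose components are g₃ = diag(−e^{mτ}, e^{mτ}, 1). Then the vector field Y₂ with components Y₂ = (−(2/m)e^{−(m/2)(τ+x)}, −(2/m)e^{−(m/2)(τ+x)}, 0) is a Killing vector of g₃. -/
import Mathlib


open Real

/-- Partial derivative of a scalar function on `ℝⁿ` with respect to the `c`-th coordinate. -/
noncomputable def pd {n : ℕ} (f : (Fin n → ℝ) → ℝ) (c : Fin n) (p : Fin n → ℝ) : ℝ :=
  fderiv ℝ f p (Pi.single c 1)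

lemma pd_rexp (r a b : ℝ) (c : Fin 3) (p : Fin 3 → ℝ) :
    pd (fun q => r * Real.exp (a * q 0 + b * q 1)) c p
      = r * Real.exp (a * p 0 + b * p 1) * (a * (Pi.single c (1:ℝ) : Fin 3 → ℝ) 0 + b * (Pi.single c (1:ℝ) : Fin 3 → ℝ) 1) := by
  have h0 : HasFDerivAt (fun q : Fin 3 → ℝ => a * q 0 + b * q 1)
      (a • (ContinuousLinearMap.proj 0 : (Fin 3 → ℝ) →L[ℝ] ℝ)
        + b • (ContinuousLinearMap.proj 1 : (Fin 3 → ℝ) →L[ℝ] ℝ)) p := by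
    exact (((ContinuousLinearMap.proj 0 : (Fin 3 → ℝ) →L[ℝ] ℝ).hasFDerivAt.const_mul a).add
      (((ContinuousLinearMap.proj 1 : (Fin 3 → ℝ) →L[ℝ] ℝ).hasFDerivAt.const_mul b)))
  have h1 := (h0.exp).const_mul r
  rw [pd, h1.fderiv]
  simp [ContinuousLinearMap.proj_apply]
  ring

lemma pd_const (r : ℝ) (c : Fin 3) (p : Fin 3 → ℝ) : pd (fun _ => r) c p = 0 := by
  simp [pd]

lemma pd_e (m : ℝ) (c : Fin 3) (p : Fin 3 → ℝ) :
    pd (fun q : Fin 3 → ℝ => Real.exp (m * q 0)) c p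
      = m * Real.exp (m * p 0) * (Pi.single c (1:ℝ) : Fin 3 → ℝ) 0 := by
  have h : (fun q : Fin 3 → ℝ => Real.exp (m * q 0))
      = fun q : Fin 3 → ℝ => (1:ℝ) * Real.exp (m * q 0 + 0 * q 1) := by
    funext q; ring_nf
  rw [pd, h, ← pd, pd_rexp]
  ring_nf

lemma pd_ne (m : ℝ) (c : Fin 3) (p : Fin 3 → ℝ) :
    pd (fun q : Fin 3 → ℝ => -Real.exp (m * q 0)) c p
      = -(m * Real.exp (m * p 0)) * (Pi.single c (1:ℝ) : Fin 3 → ℝ) 0 := by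
  have h : (fun q : Fin 3 → ℝ => -Real.exp (m * q 0))
      = fun q : Fin 3 → ℝ => (-1:ℝ) * Real.exp (m * q 0 + 0 * q 1) := by
    funext q; ring_nf
  rw [pd, h, ← pd, pd_rexp]
  ring_nf

lemma pd_X (m : ℝ) (hm : m ≠ 0) (c : Fin 3) (p : Fin 3 → ℝ) :
    pd (fun q : Fin 3 → ℝ => -((2 / m) * Real.exp (-(m / 2) * (q 0 + q 1)))) c p
      = Real.exp (-(m / 2) * (p 0 + p 1))
        * ((Pi.single c (1:ℝ) : Fin 3 → ℝ) 0 + (Pi.single c (1:ℝ) : Fin 3 → ℝ) 1) := by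
  have h : (fun q : Fin 3 → ℝ => -((2 / m) * Real.exp (-(m / 2) * (q 0 + q 1))))
      = fun q : Fin 3 → ℝ => (-(2/m)) * Real.exp ((-(m/2)) * q 0 + (-(m/2)) * q 1) := by
    funext q; ring_nf
  rw [pd, h, ← pd, pd_rexp]
  field_simp
  ring

/-- `X` is a conformal Killing vector of the metric `g` with conformal factor `ψ`:
for all indices `a b` and all points `p`,
`Σ_c [X^c ∂_c g_{ab} + g_{cb} ∂_a X^c + g_{ac} ∂_b X^c] = 2 ψ g_{ab}`. -/
def IsCKV {n : ℕ} (g : (Fin n → ℝ) → Matrix (Fin n) (Fin n) ℝ)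
    (X : (Fin n → ℝ) → (Fin n → ℝ)) (ψ : (Fin n → ℝ) → ℝ) : Prop :=
  ∀ (a b : Fin n) (p : Fin n → ℝ),
    (∑ c, (X p c * pd (fun q => g q a b) c p
      + g p c b * pd (fun q => X q c) a p
      + g p a c * pd (fun q => X q c) b p)) = 2 * ψ p * g p a b

lemma fin3_mk0 (h : 0 < 3) : (⟨0, h⟩ : Fin 3) = 0 := rfl
lemma fin3_mk1 (h : 1 < 3) : (⟨1, h⟩ : Fin 3) = 1 := rfl
lemma fin3_mk2 (h : 2 < 3) : (⟨2, h⟩ : Fin 3) = 2 := rfl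

/-- `Y₂` is a Killing vector of `g₃ = diag(−e^{mτ}, e^{mτ}, 1)`. -/
theorem Y2_is_KV (m : ℝ) (hm : m ≠ 0) :
    IsCKV
      (fun p : Fin 3 → ℝ =>
        Matrix.diagonal ![-Real.exp (m * p 0), Real.exp (m * p 0), 1])
      (fun p : Fin 3 → ℝ =>
        ![-((2 / m) * Real.exp (-(m / 2) * (p 0 + p 1))),
          -((2 / m) * Real.exp (-(m / 2) * (p 0 + p 1))), 0])
      (fun _ => 0) := by
  intro a b p
  fin_cases a <;> fin_cases b <;>
    simp only [fin3_mk0, fin3_mk1, fin3_mk2, Fin.isValue, Fin.sum_univ_three,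
      Matrix.diagonal_apply, Matrix.cons_val_zero, Matrix.cons_val_one, Matrix.head_cons,
      Matrix.cons_val_two, Matrix.tail_cons, ↓reduceIte, Fin.reduceEq] <;>
    simp only [pd_ne, pd_e, pd_X m hm, pd_const] <;>
    simp [Pi.single_apply] <;>
    field_simp <;>
    ring
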